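/- Symmetric error representation for linear problems: with A bilinear, u, z the exact primal and adjoint solutions, and ũ, z̃ arbitrary, one has J(u) − J(ũ) = ½ρ(ũ)(z − z̃) + ½ρ*(ũ, z̃)(u − ũ) + ½[ρ(ũ)(z̃) + ρ*(ũ, z̃)(ũ) − J(ũ) + F(z̃)] where ρ(ũ)(φ) = F(φ) − A(ũ)(φ) and ρ*(ũ,z̃)(φ) = J(φ) − A(φ)(z̃); in particular, in the linear case the remainder term ℛ vanishes whenever the bracketed term vanishes, e.g. when ũ and z̃ are the Galerkin solutions of the primal and adjoint discrete problems in the same subspace. -/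
import Mathlib

/-- Symmetric (DWR) error representation for linear problems:
`J(u) − J(ũ) = ½ρ(ũ)(z−z̃) + ½ρ*(ũ,z̃)(u−ũ) + ½[ρ(ũ)(z̃) + ρ*(ũ,z̃)(ũ) − J(ũ) + F(z̃)]`
with `ρ(ũ)(φ) = F(φ) − A(ũ)(φ)` and `ρ*(ũ,z̃)(φ) = J(φ) − A(φ)(z̃)`. -/
theorem stmt_8 {V : Type*} [NormedAddCommGroup V] [InnerProductSpace ℝ V]
    (A : V →ₗ[ℝ] V →ₗ[ℝ] ℝ) (F J : V →ₗ[ℝ] ℝ)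
    (u z : V)
    (hprimal : ∀ φ : V, A u φ = F φ)
    (hadjoint : ∀ φ : V, A φ z = J φ)
    (utilde ztilde : V) :
    J u - J utilde =
      (1/2) * (F (z - ztilde) - A utilde (z - ztilde))
      + (1/2) * (J (u - utilde) - A (u - utilde) ztilde)
      + (1/2) * ((F ztilde - A utilde ztilde) + (J utilde - A utilde ztilde)
                  - J utilde + F ztilde) := by
  simp only [map_sub, LinearMap.sub_apply, ← hprimal, ← hadjoint]
  ring
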